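/- arXiv:1009.0276 — 4 statements merged into one kernel-verified Lean document; each statement's English description precedes it below -/
import Mathlib

section
/- Let Λ be a finite set of complex numbers, each of modulus 1, and let c_λ (λ ∈ Λ) be complex numbers. If the sequence n ↦ Σ_{λ∈Λ} c_λ λ^n tends to 0 as n → ∞, then c_λ = 0 for every λ ∈ Λ. -/
/-!
Fix `μ ∈ Λ` and divide the sum by `μⁿ`; it still tends to `0`, since `‖μ‖ = 1`. Average over
`n < N`: the Cesàro means of `(l / μ)ⁿ` tend to `1` for `l = μ` and to `0` for `l ≠ μ`, because the
geometric sums `∑ (l / μ)ⁿ` stay bounded. Hence the Cesàro means of the twisted sum tend to `c μ`,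
while they must also tend to `0`.
-/

open Filter Finset Topology

section Cesaro

variable {𝕜 : Type*} [RCLike 𝕜]

theorem tendsto_cesaro_pow_of_norm_le_one_of_ne_one {r : 𝕜} (hr : ‖r‖ ≤ 1) (hr1 : r ≠ 1) :
    Tendsto (fun N : ℕ => (N⁻¹ : ℝ) • ∑ n ∈ range N, r ^ n) atTop (𝓝 0) := by
  have hbound : ∀ N : ℕ, ‖(N⁻¹ : ℝ) • ∑ n ∈ range N, r ^ n‖ ≤ (N : ℝ)⁻¹ * (2 / ‖r - 1‖) := by
    intro N
    have hpow : ‖r ^ N - 1‖ ≤ 2 := by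
      calc ‖r ^ N - 1‖ ≤ ‖r ^ N‖ + ‖(1 : 𝕜)‖ := norm_sub_le _ _
        _ ≤ 1 + 1 := by
          rw [norm_pow, norm_one]
          gcongr
          exact pow_le_one₀ (norm_nonneg r) hr
        _ = 2 := by norm_num
    rw [geom_sum_eq hr1, norm_smul, norm_div, norm_inv, Real.norm_natCast]
    gcongr
  refine squeeze_zero_norm hbound ?_
  simpa using tendsto_inv_atTop_nhds_zero_nat.mul_const (2 / ‖r - 1‖)

theorem tendsto_cesaro_pow_of_norm_le_one {r : 𝕜} (hr : ‖r‖ ≤ 1) :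
    Tendsto (fun N : ℕ => (N⁻¹ : ℝ) • ∑ n ∈ range N, r ^ n) atTop
      (𝓝 (if r = 1 then 1 else 0)) := by
  split_ifs with hr1
  · refine tendsto_const_nhds.congr' ?_
    filter_upwards [eventually_ne_atTop 0] with N hN
    simp [hr1, RCLike.real_smul_eq_coe_mul, hN]
  · exact tendsto_cesaro_pow_of_norm_le_one_of_ne_one hr hr1

theorem tendsto_cesaro_sum_mul_div_pow {Λ : Finset 𝕜} {μ : 𝕜} (c : 𝕜 → 𝕜)
    (hΛ : ∀ l ∈ Λ, ‖l‖ ≤ ‖μ‖) (hμ : μ ∈ Λ) (hμ0 : μ ≠ 0) :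
    Tendsto (fun N : ℕ => (N⁻¹ : ℝ) • ∑ n ∈ range N, ∑ l ∈ Λ, c l * (l / μ) ^ n) atTop
      (𝓝 (c μ)) := by
  have hswap : ∀ N : ℕ, (N⁻¹ : ℝ) • ∑ n ∈ range N, ∑ l ∈ Λ, c l * (l / μ) ^ n =
      ∑ l ∈ Λ, c l * ((N⁻¹ : ℝ) • ∑ n ∈ range N, (l / μ) ^ n) := by
    intro N
    simp only [smul_sum, mul_sum, mul_smul_comm]
    exact sum_comm
  have hterm : ∀ l ∈ Λ, Tendsto (fun N : ℕ => c l * ((N⁻¹ : ℝ) • ∑ n ∈ range N, (l / μ) ^ n))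
      atTop (𝓝 (if l = μ then c l else 0)) := by
    intro l hl
    have hnorm : ‖l / μ‖ ≤ 1 := by
      rw [norm_div]
      exact div_le_one_of_le₀ (hΛ l hl) (norm_nonneg μ)
    simpa [div_eq_one_iff_eq hμ0] using
      (tendsto_cesaro_pow_of_norm_le_one hnorm).const_mul (c l)
  simpa [hswap, hμ] using tendsto_finsetSum Λ hterm

end Cesaro

theorem stmt_0 (Λ : Finset ℂ) (hΛ : ∀ l ∈ Λ, ‖l‖ = 1) (c : ℂ → ℂ)
    (h : Filter.Tendsto (fun n : ℕ => ∑ l ∈ Λ, c l * l ^ n) Filter.atTop (nhds 0)) :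
    ∀ l ∈ Λ, c l = 0 := by
  intro μ hμ
  have hμ1 : ‖μ‖ = 1 := hΛ μ hμ
  have hμ0 : μ ≠ 0 := norm_ne_zero_iff.mp (by rw [hμ1]; exact one_ne_zero)
  have htwist : Tendsto (fun n : ℕ => ∑ l ∈ Λ, c l * (l / μ) ^ n) atTop (𝓝 0) := by
    rw [tendsto_zero_iff_norm_tendsto_zero] at h ⊢
    refine h.congr fun n => ?_
    simp only [div_pow, mul_div_assoc', ← sum_div, norm_div, norm_pow, hμ1, one_pow, div_one]
  exact tendsto_nhds_unique
    (tendsto_cesaro_sum_mul_div_pow c (fun l hl => ((hΛ l hl).trans hμ1.symm).le) hμ hμ0)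
    htwist.cesaro_smul
end

section
/- Let (a_n) be a sequence of complex numbers, r > 0, Λ a finite set of complex numbers of modulus r, and suppose c_λ (λ ∈ Λ) are complex numbers, not all zero, such that a_n r^{-n}/h(n) − Σ_{λ∈Λ} c_λ (λ/r)^n → 0, where h(n) = (log n)^β / n^α for some rational α and natural β. Then limsup_{n→∞} |a_n|^{1/n} = r. -/
/-!
Write `a n = b n * w n * r ^ n` with `w n = (log n) ^ β / n ^ α`. The normalised sequence `b` is
asymptotic to `S n = ∑ c λ (λ / r) ^ n`, which is bounded and does not tend to `0`: for `μ ∈ Λ`,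
the Cesàro means of `S n * (r / μ) ^ n` tend to `c μ`, because the Cesàro means of `ζ ^ n` vanish
in the limit for every `ζ ≠ 1` on the unit circle. So `‖b n‖` is eventually bounded above and
frequently bounded below by positive constants. Since `(C * w n) ^ (1 / n) → 1` for every `C > 0`,
the root `‖a n‖ ^ (1 / n)` is eventually below, and frequently above, sequences tending to `r`.
-/

open Filter Finset Topology

theorem tendsto_cesaro_geom_sum_of_norm_le_one {z : ℂ} (hz : ‖z‖ ≤ 1) (hz1 : z ≠ 1) :
    Tendsto (fun N : ℕ => (N⁻¹ : ℝ) • ∑ n ∈ range N, z ^ n) atTop (𝓝 0) := by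
  have hbound : ∀ N : ℕ, ‖(N⁻¹ : ℝ) • ∑ n ∈ range N, z ^ n‖ ≤ (N : ℝ)⁻¹ * (2 / ‖z - 1‖) := by
    intro N
    rw [norm_smul, geom_sum_eq hz1 N, norm_div, Real.norm_of_nonneg (by positivity)]
    gcongr
    calc ‖z ^ N - 1‖ ≤ ‖z ^ N‖ + ‖(1 : ℂ)‖ := norm_sub_le _ _
      _ ≤ 2 := by rw [norm_pow, norm_one]; linarith [pow_le_one₀ (n := N) (norm_nonneg z) hz]
  refine squeeze_zero_norm hbound ?_
  simpa using tendsto_inv_atTop_nhds_zero_nat.mul_const (2 / ‖z - 1‖)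

theorem eq_zero_of_tendsto_sum_mul_pow {ι : Type*} {s : Finset ι} {c z : ι → ℂ}
    (hz : ∀ i ∈ s, ‖z i‖ = 1) (hinj : Set.InjOn z s)
    (h : Tendsto (fun n : ℕ => ∑ i ∈ s, c i * z i ^ n) atTop (𝓝 0)) {j : ι} (hj : j ∈ s) :
    c j = 0 := by
  classical
  have hzj : z j ≠ 0 := by rw [← norm_ne_zero_iff, hz j hj]; exact one_ne_zero
  have hrot : Tendsto (fun n : ℕ => ∑ i ∈ s, c i * (z i / z j) ^ n) atTop (𝓝 0) := by
    rw [tendsto_zero_iff_norm_tendsto_zero] at h ⊢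
    refine h.congr fun n => ?_
    simp_rw [div_pow, ← mul_div_assoc, ← sum_div, norm_div, norm_pow, hz j hj, one_pow, div_one]
  have hmean : ∀ i ∈ s, Tendsto (fun N : ℕ => (N⁻¹ : ℝ) • ∑ n ∈ range N, (z i / z j) ^ n)
      atTop (𝓝 (if i = j then 1 else 0)) := by
    intro i hi
    split_ifs with hij
    · subst hij
      refine tendsto_const_nhds.congr' ?_
      filter_upwards [eventually_ne_atTop 0] with N hN
      simp [div_self hzj, hN]
    · refine tendsto_cesaro_geom_sum_of_norm_le_one (by simp [hz i hi, hz j hj]) ?_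
      rw [Ne, div_eq_one_iff_eq hzj]
      exact fun hdiv => hij (hinj hi hj hdiv)
  have hlim := tendsto_finsetSum s fun i hi => (hmean i hi).const_mul (c i)
  simp only [mul_ite, mul_one, mul_zero, sum_ite_eq', hj, if_true] at hlim
  refine tendsto_nhds_unique hlim (hrot.cesaro_smul.congr fun N => ?_)
  simp only [smul_sum, mul_smul_comm, mul_sum]
  exact sum_comm

open Asymptotics Real

theorem eventually_pos_log_pow_div_rpow (α : ℝ) (β : ℕ) :
    ∀ᶠ n : ℕ in atTop, 0 < log n ^ β / (n : ℝ) ^ α := by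
  filter_upwards [(tendsto_log_atTop.comp tendsto_natCast_atTop_atTop).eventually_gt_atTop 0,
    eventually_gt_atTop 0] with n hlog hn
  have : (0 : ℝ) < log n := hlog
  positivity

theorem tendsto_rpow_one_div_of_tendsto_log_div {g : ℕ → ℝ} (hg : ∀ᶠ n in atTop, 0 < g n)
    (h : Tendsto (fun n : ℕ => log (g n) / n) atTop (𝓝 0)) :
    Tendsto (fun n : ℕ => g n ^ (1 / (n : ℝ))) atTop (𝓝 1) := by
  have hexp := (continuous_exp.tendsto 0).comp h
  rw [exp_zero] at hexp
  refine hexp.congr' ?_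
  filter_upwards [hg] with n hn
  rw [rpow_def_of_pos hn, Function.comp_apply, mul_one_div]

theorem tendsto_rpow_one_div_const_mul_log_pow_div_rpow {C : ℝ} (hC : 0 < C) (α : ℝ) (β : ℕ) :
    Tendsto (fun n : ℕ => (C * (log n ^ β / (n : ℝ) ^ α)) ^ (1 / (n : ℝ))) atTop (𝓝 1) := by
  have hlittle : (fun x => log C + β * log (log x) - α * log x) =o[atTop] id := by
    have hloglog : (fun x => log (log x)) =o[atTop] id :=
      (isLittleO_log_id_atTop.comp_tendsto tendsto_log_atTop).trans isLittleO_log_id_atTop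
    exact ((isLittleO_const_id_atTop _).add (hloglog.const_mul_left _)).sub
      (isLittleO_log_id_atTop.const_mul_left _)
  refine tendsto_rpow_one_div_of_tendsto_log_div
    ((eventually_pos_log_pow_div_rpow α β).mono fun n hn => mul_pos hC hn) ?_
  refine (hlittle.tendsto_div_nhds_zero.comp tendsto_natCast_atTop_atTop).congr' ?_
  filter_upwards [(tendsto_log_atTop.comp tendsto_natCast_atTop_atTop).eventually_gt_atTop 0,
    eventually_gt_atTop 0] with n hlog hn
  have hn' : (0 : ℝ) < n := Nat.cast_pos.mpr hn
  have : (0 : ℝ) < log n := hlog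
  rw [Function.comp_apply, id, log_mul hC.ne' (by positivity),
    log_div (by positivity) (by positivity), log_pow, log_rpow hn']
  ring

theorem mul_pow_rpow_one_div {x r : ℝ} (hx : 0 ≤ x) (hr : 0 ≤ r) {n : ℕ} (hn : n ≠ 0) :
    (x * r ^ n) ^ (1 / (n : ℝ)) = x ^ (1 / (n : ℝ)) * r := by
  rw [mul_rpow hx (by positivity), one_div, pow_rpow_inv_natCast hr hn]

theorem limsup_eq_of_frequently_ge_of_eventually_le {ι : Type*} {f : Filter ι}
    {u lo hi : ι → ℝ} {L : ℝ} (hlo : Tendsto lo f (𝓝 L)) (hhi : Tendsto hi f (𝓝 L))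
    (hfreq : ∃ᶠ i in f, lo i ≤ u i) (hev : ∀ᶠ i in f, u i ≤ hi i) :
    limsup u f = L := by
  have : f.NeBot := (frequently_true_iff_neBot f).mp (hfreq.mono fun _ _ => trivial)
  have hbdd : IsBoundedUnder (· ≤ ·) f u := hhi.isBoundedUnder_le.mono_le hev
  have hge : ∀ m < L, ∃ᶠ i in f, m ≤ u i := fun m hm =>
    (hfreq.and_eventually (hlo.eventually (eventually_ge_nhds hm))).mono
      fun i ⟨hle, hm⟩ => hm.trans hle
  apply le_antisymm
  · obtain ⟨m, hm⟩ := exists_lt L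
    calc limsup u f ≤ limsup hi f :=
          limsup_le_limsup hev (IsCoboundedUnder.of_frequently_ge (hge m hm))
            hhi.isBoundedUnder_le
      _ = L := hhi.limsup_eq
  · exact le_of_forall_lt_imp_le_of_dense fun m hm => le_limsup_of_frequently_le (hge m hm) hbdd

theorem limsup_norm_rpow_one_div_eq {a b : ℕ → ℂ} {w : ℕ → ℝ} {r B ε : ℝ} (hr : 0 < r)
    (hε : 0 < ε) (hw : ∀ᶠ n in atTop, 0 < w n)
    (hab : ∀ᶠ n in atTop, ‖a n‖ = ‖b n‖ * w n * r ^ n)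
    (hroot : ∀ C > 0, Tendsto (fun n : ℕ => (C * w n) ^ (1 / (n : ℝ))) atTop (𝓝 1))
    (hupper : ∀ᶠ n in atTop, ‖b n‖ ≤ B) (hlower : ∃ᶠ n in atTop, ε ≤ ‖b n‖) :
    limsup (fun n : ℕ => ‖a n‖ ^ (1 / (n : ℝ))) atTop = r := by
  have hB : 0 < B := by
    obtain ⟨n, hεn, hBn⟩ := (hlower.and_eventually hupper).exists
    linarith
  have hroot_r : ∀ C > 0, Tendsto (fun n : ℕ => (C * w n) ^ (1 / (n : ℝ)) * r) atTop (𝓝 r) :=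
    fun C hC => by simpa using (hroot C hC).mul_const r
  have hroot_eq : ∀ᶠ n in atTop, ∀ C ≥ 0,
      (C * w n * r ^ n) ^ (1 / (n : ℝ)) = (C * w n) ^ (1 / (n : ℝ)) * r := by
    filter_upwards [hw, eventually_ne_atTop 0] with n hwn hn C hC
    exact mul_pow_rpow_one_div (by positivity) hr.le hn
  refine limsup_eq_of_frequently_ge_of_eventually_le (hroot_r ε hε) (hroot_r B hB) ?_ ?_
  · refine (hlower.and_eventually (hw.and (hab.and hroot_eq))).mono ?_
    rintro n ⟨hεn, hwn, habn, heq⟩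
    rw [← heq ε hε.le, habn]
    gcongr
  · filter_upwards [hupper, hw, hab, hroot_eq] with n hBn hwn habn heq
    rw [← heq B hB.le, habn]
    gcongr

theorem stmt_5 (a : ℕ → ℂ) (r : ℝ) (hr : 0 < r) (Λ : Finset ℂ)
    (hΛ : ∀ l ∈ Λ, ‖l‖ = r) (c : ℂ → ℂ)
    (hc : ∃ l ∈ Λ, c l ≠ 0) (α : ℚ) (β : ℕ)
    (h : Filter.Tendsto
      (fun n : ℕ =>
        a n * (r : ℂ) ^ (-(n : ℤ)) / (((Real.log n) ^ β / (n : ℝ) ^ ((α : ℝ)) : ℝ) : ℂ)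
          - ∑ l ∈ Λ, c l * (l / (r : ℂ)) ^ n)
      Filter.atTop (nhds 0)) :
    Filter.limsup (fun n : ℕ => ‖a n‖ ^ (1 / (n : ℝ))) Filter.atTop = r := by
  have hrC : (r : ℂ) ≠ 0 := by exact_mod_cast hr.ne'
  set w : ℕ → ℝ := fun n => Real.log n ^ β / (n : ℝ) ^ (α : ℝ)
  set b : ℕ → ℂ := fun n => a n * (r : ℂ) ^ (-(n : ℤ)) / (w n : ℂ)
  set S : ℕ → ℂ := fun n => ∑ l ∈ Λ, c l * (l / (r : ℂ)) ^ n
  have hclose := Metric.tendsto_nhds.mp (show Tendsto (fun n => b n - S n) atTop (𝓝 0) from h)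
  have hunit : ∀ l ∈ Λ, ‖l / (r : ℂ)‖ = 1 := fun l hl => by
    rw [norm_div, hΛ l hl, Complex.norm_real, Real.norm_of_nonneg hr.le, div_self hr.ne']
  have hS_le : ∀ n, ‖S n‖ ≤ ∑ l ∈ Λ, ‖c l‖ := fun n =>
    (norm_sum_le _ _).trans <| sum_le_sum fun l hl => by
      rw [norm_mul, norm_pow, hunit l hl, one_pow, mul_one]
  obtain ⟨ε, hε, hS_ge⟩ : ∃ ε > 0, ∃ᶠ n in atTop, ε ≤ ‖S n‖ := by
    obtain ⟨l, hl, hcl⟩ := hc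
    have hS : ¬ Tendsto S atTop (𝓝 0) := fun hS =>
      hcl (eq_zero_of_tendsto_sum_mul_pow hunit (fun _ _ _ _ => (div_left_inj' hrC).mp) hS hl)
    simpa only [Metric.tendsto_nhds, not_forall, not_eventually, not_lt, dist_zero_right,
      exists_prop] using hS
  refine limsup_norm_rpow_one_div_eq (b := b) (B := ∑ l ∈ Λ, ‖c l‖ + 1) hr (half_pos hε)
    (eventually_pos_log_pow_div_rpow α β) ?_
    (fun C hC => tendsto_rpow_one_div_const_mul_log_pow_div_rpow hC α β) ?_ ?_
  · filter_upwards [eventually_pos_log_pow_div_rpow α β] with n hn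
    change 0 < w n at hn
    change ‖a n‖ = ‖b n‖ * w n * r ^ n
    simp only [b, zpow_neg, zpow_natCast, norm_div, norm_mul, norm_inv, norm_pow,
      Complex.norm_real, Real.norm_of_nonneg hn.le, Real.norm_of_nonneg hr.le]
    field_simp [hn.ne']
  · filter_upwards [hclose 1 one_pos] with n hn
    rw [dist_zero_right] at hn
    linarith [norm_le_norm_add_norm_sub' (b n) (S n), hS_le n]
  · refine (hS_ge.and_eventually (hclose (ε / 2) (half_pos hε))).mono fun n ⟨hSn, hn⟩ => ?_
    rw [dist_zero_right] at hn
    linarith [norm_le_norm_add_norm_sub (b n) (S n)]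
end

section
/- Suppose a complex sequence (a_n) admits two minimal asymptotic expansions of Nilsson type, indexed by (Ω, Λ, c) and (Ω', Λ', c'), where Λ, Λ' are finite sets of nonzero complex numbers of common modulus r and r' respectively, Ω, Ω' are well-ordered index sets of Nilsson monomials, and minimality means each row and column of the coefficient array contains a nonzero entry. Then Ω = Ω', Λ = Λ', and c_{ω,λ} = c'_{ω,λ} for all (ω,λ). -/
/-- The order on Nilsson monomial indices: `(α,β) < (α',β')` iff `α < α'` or
(`α = α'` and `β' < β`). -/
def NilssonLt (p q : ℚ × ℕ) : Prop := p.1 < q.1 ∨ (p.1 = q.1 ∧ q.2 < p.2)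

def NilssonLe (p q : ℚ × ℕ) : Prop := NilssonLt p q ∨ p = q

/-- The Nilsson monomial `h_{(α,β)}(n) = (log n)^β / n^α`. -/
noncomputable def nilssonMonomial (p : ℚ × ℕ) (n : ℕ) : ℝ :=
  (Real.log n) ^ p.2 / (n : ℝ) ^ ((p.1 : ℝ))

/-- The index set `Ω = (S + ℕ) × {0, …, d}`. -/
def OmegaSet (S : Finset ℚ) (d : ℕ) : Set (ℚ × ℕ) :=
  {p | (∃ s ∈ S, ∃ m : ℕ, p.1 = s + m) ∧ p.2 ≤ d}

/-- `a_n ∼ Σ_{ω∈Ω} h_ω(n) Σ_{λ∈Λ} c_{ω,λ} λ^n`: for every `ω ∈ Ω`,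
`(a_n r^{-n} − Σ_{ω' ≤ ω} h_{ω'}(n) Σ_λ c_{ω',λ}(λ/r)^n)/h_ω(n) → 0`,
and some coefficient is nonzero. -/
noncomputable def IsNilssonExpansion (a : ℕ → ℂ) (Ω : Set (ℚ × ℕ)) (Λ : Finset ℂ)
    (r : ℝ) (c : ℚ × ℕ → ℂ → ℂ) : Prop :=
  (∀ ω ∈ Ω, Filter.Tendsto
    (fun n : ℕ =>
      (a n * (r : ℂ) ^ (-(n : ℤ)) -
        ∑ᶠ ω' ∈ {ω' | ω' ∈ Ω ∧ NilssonLe ω' ω},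
          ((nilssonMonomial ω' n : ℝ) : ℂ) * ∑ l ∈ Λ, c ω' l * (l / (r : ℂ)) ^ n)
      / ((nilssonMonomial ω n : ℝ) : ℂ))
    Filter.atTop (nhds 0))
  ∧ ∃ ω ∈ Ω, ∃ l ∈ Λ, c ω l ≠ 0

/-!
Both expansions are rewritten over the union `U` of their index sets, in which every index has
only finitely many predecessors, so one can argue by strong induction along the Nilsson order.
At `ω ∈ U`, once all smaller terms agree, subtracting the two expansions and dividing by `h_ω`
gives `Σ_λ (c_{ω,λ} - c'_{ω,λ}) (λ/r)^n → 0`, and an exponential sum on a circle tends to `0`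
only if all its coefficients vanish. The radii agree beforehand: if `r < r'`, the first
expansion makes `a_n r'^{-n}` exponentially smaller than every Nilsson monomial, which kills
the leading row of the second. Minimality turns equality of the coefficient arrays into
`Ω = Ω'` and `Λ = Λ'`.
-/

open Filter Topology

def nilssonKey (p : ℚ × ℕ) : Lex (ℚ × ℕᵒᵈ) := toLex (p.1, OrderDual.toDual p.2)

lemma nilssonKey_injective : Function.Injective nilssonKey := fun p q h => by
  simpa [nilssonKey, Prod.ext_iff] using h

lemma nilssonLt_iff_key_lt {p q : ℚ × ℕ} : NilssonLt p q ↔ nilssonKey p < nilssonKey q := by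
  simp [NilssonLt, nilssonKey, Prod.Lex.toLex_lt_toLex]

lemma nilssonLe_iff_key_le {p q : ℚ × ℕ} : NilssonLe p q ↔ nilssonKey p ≤ nilssonKey q := by
  rw [NilssonLe, nilssonLt_iff_key_lt, le_iff_lt_or_eq, nilssonKey_injective.eq_iff]

lemma NilssonLe.fst_le {p q : ℚ × ℕ} (h : NilssonLe p q) : p.1 ≤ q.1 := by
  rcases h with (h | ⟨h, -⟩) | rfl
  exacts [h.le, h.le, le_rfl]

noncomputable def expSum (Λ : Finset ℂ) (r : ℝ) (c : ℂ → ℂ) (n : ℕ) : ℂ :=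
  ∑ l ∈ Λ, c l * (l / r) ^ n

section expSum

variable {Λ : Finset ℂ} {r : ℝ}

lemma expSum_sub (c c' : ℂ → ℂ) (n : ℕ) :
    expSum Λ r (c - c') n = expSum Λ r c n - expSum Λ r c' n := by
  simp only [expSum, Pi.sub_apply, sub_mul, Finset.sum_sub_distrib]

lemma isBoundedUnder_norm_expSum (hr : 0 < r) (hΛ : ∀ l ∈ Λ, ‖l‖ = r) (c : ℂ → ℂ) :
    IsBoundedUnder (· ≤ ·) atTop (norm ∘ expSum Λ r c) := by
  refine isBoundedUnder_of_eventually_le (a := ∑ l ∈ Λ, ‖c l‖) (Eventually.of_forall fun n => ?_)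
  refine (norm_sum_le _ _).trans (Finset.sum_le_sum fun l hl => ?_)
  rw [norm_mul, norm_pow, norm_div, Complex.norm_real, Real.norm_of_nonneg hr.le, hΛ l hl,
    div_self hr.ne', one_pow, mul_one]

lemma tendsto_cesaro_pow {μ : ℂ} (hμ : ‖μ‖ = 1) :
    Tendsto (fun N : ℕ => (N : ℝ)⁻¹ • ∑ n ∈ Finset.range N, μ ^ n) atTop
      (𝓝 (if μ = 1 then 1 else 0)) := by
  split_ifs with h1
  · simpa [h1] using (tendsto_const_nhds (x := (1 : ℂ))).cesaro_smul
  have hbdd : ∀ N, ‖∑ n ∈ Finset.range N, μ ^ n‖ ≤ 2 / ‖μ - 1‖ := fun N => by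
    rw [geom_sum_eq h1, norm_div]
    gcongr
    calc ‖μ ^ N - 1‖ ≤ ‖μ ^ N‖ + ‖(1 : ℂ)‖ := norm_sub_le _ _
      _ = 2 := by rw [norm_pow, hμ]; norm_num
  exact tendsto_inv_atTop_nhds_zero_nat.zero_smul_isBoundedUnder_le
    (isBoundedUnder_of_eventually_le (Eventually.of_forall hbdd))

/-- Distinct points of a circle give asymptotically independent exponentials: averaging
`Σ c_λ (λ/λ₀)^n` over `n < N` isolates `c_{λ₀}`. -/
lemma coeff_eq_zero_of_tendsto_expSum (hr : 0 < r) (hΛ : ∀ l ∈ Λ, ‖l‖ = r) {c : ℂ → ℂ}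
    (h : Tendsto (expSum Λ r c) atTop (𝓝 0)) : ∀ l ∈ Λ, c l = 0 := by
  intro l₀ hl₀
  have hl₀0 : l₀ ≠ 0 := norm_pos_iff.mp (hΛ l₀ hl₀ ▸ hr)
  have hrot : Tendsto (fun n => ∑ l ∈ Λ, c l * (l / l₀) ^ n) atTop (𝓝 0) := by
    have hbdd : IsBoundedUnder (· ≤ ·) atTop (norm ∘ fun n : ℕ => ((r : ℂ) / l₀) ^ n) :=
      isBoundedUnder_of_eventually_le (a := 1) (Eventually.of_forall fun n => by
        simp [hΛ l₀ hl₀, hr.ne', abs_of_pos hr])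
    refine (h.zero_mul_isBoundedUnder_le hbdd).congr fun n => ?_
    rw [expSum, Finset.sum_mul]
    refine Finset.sum_congr rfl fun l _ => ?_
    rw [mul_assoc, ← mul_pow, div_mul_div_cancel₀ (by exact_mod_cast hr.ne')]
  have hlim : Tendsto (fun N : ℕ => (N : ℝ)⁻¹ • ∑ n ∈ Finset.range N,
      ∑ l ∈ Λ, c l * (l / l₀) ^ n) atTop (𝓝 (c l₀)) := by
    have := tendsto_finsetSum Λ fun l hl => (tendsto_cesaro_pow (μ := l / l₀)
      (by rw [norm_div, hΛ l hl, hΛ l₀ hl₀, div_self hr.ne'])).const_mul (c l)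
    simp only [div_eq_one_iff_eq hl₀0, mul_ite, mul_one, mul_zero,
      Finset.sum_ite_eq', if_pos hl₀] at this
    refine this.congr fun N => ?_
    rw [Finset.sum_comm, Finset.smul_sum]
    exact Finset.sum_congr rfl fun l _ => by rw [mul_smul_comm, Finset.mul_sum]
  exact tendsto_nhds_unique hlim hrot.cesaro_smul

end expSum

section nilssonMonomial

lemma nilssonMonomial_pos (p : ℚ × ℕ) {n : ℕ} (hn : 2 ≤ n) : 0 < nilssonMonomial p n := by
  have hn' : (1 : ℝ) < n := by exact_mod_cast hn
  exact div_pos (pow_pos (Real.log_pos hn') _) (Real.rpow_pos_of_pos (by linarith) _)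

lemma nilssonMonomial_div_nilssonMonomial (p q : ℚ × ℕ) {n : ℕ} (hn : 2 ≤ n) :
    nilssonMonomial q n / nilssonMonomial p n
      = Real.log n ^ ((q.2 : ℝ) - p.2) / (n : ℝ) ^ ((q.1 : ℝ) - p.1) := by
  have hn' : (1 : ℝ) < n := by exact_mod_cast hn
  rw [Real.rpow_sub (Real.log_pos hn'), Real.rpow_sub (by linarith), Real.rpow_natCast,
    Real.rpow_natCast, nilssonMonomial, nilssonMonomial, div_div_div_comm]

lemma tendsto_nilssonMonomial_div_of_lt {p q : ℚ × ℕ} (hpq : NilssonLt p q) :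
    Tendsto (fun n => nilssonMonomial q n / nilssonMonomial p n) atTop (𝓝 0) := by
  have hlog : Tendsto (fun x : ℝ => Real.log x ^ ((q.2 : ℝ) - p.2) / x ^ ((q.1 : ℝ) - p.1))
      atTop (𝓝 0) := by
    rcases hpq with hlt | ⟨heq, hlt⟩
    · have hexp : 0 < (q.1 : ℝ) - p.1 := sub_pos.mpr (by exact_mod_cast hlt)
      exact (isLittleO_log_rpow_rpow_atTop _ hexp).tendsto_div_nhds_zero
    · have hexp : 0 < (p.2 : ℝ) - q.2 := sub_pos.mpr (by exact_mod_cast hlt)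
      refine ((tendsto_rpow_neg_atTop hexp).comp Real.tendsto_log_atTop).congr' ?_
      filter_upwards [eventually_gt_atTop 0] with x hx
      simp [heq]
  refine (hlog.comp tendsto_natCast_atTop_atTop).congr' ?_
  filter_upwards [eventually_ge_atTop 2] with n hn
  exact (nilssonMonomial_div_nilssonMonomial p q hn).symm

lemma tendsto_nilssonMonomial_div_of_le {p q : ℚ × ℕ} (hpq : NilssonLe p q) :
    Tendsto (fun n => nilssonMonomial q n / nilssonMonomial p n) atTop
      (𝓝 (if q = p then 1 else 0)) := by
  rcases hpq with hlt | rfl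
  · rw [if_neg fun h => (nilssonLt_iff_key_lt.mp hlt).ne (congrArg nilssonKey h.symm)]
    exact tendsto_nilssonMonomial_div_of_lt hlt
  · rw [if_pos rfl]
    refine tendsto_const_nhds.congr' ?_
    filter_upwards [eventually_ge_atTop 2] with n hn
    exact (div_self (nilssonMonomial_pos p hn).ne').symm

/-- Shifting `α` by an integer `k` trades `h` for `h · n^k`, and `ρ^n n^k → 0`. -/
lemma tendsto_pow_mul_nilssonMonomial_div {ρ : ℝ} (hρ : |ρ| < 1) (p q : ℚ × ℕ) :
    Tendsto (fun n => ρ ^ n * nilssonMonomial p n / nilssonMonomial q n) atTop (𝓝 0) := by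
  obtain ⟨k, hk⟩ := exists_nat_gt (q.1 - p.1)
  have hlt : NilssonLt (q.1 - k, q.2) p := Or.inl (by simp only; linarith)
  have := (tendsto_pow_const_mul_const_pow_of_abs_lt_one k hρ).mul
    (tendsto_nilssonMonomial_div_of_lt hlt)
  rw [zero_mul] at this
  refine this.congr' ?_
  filter_upwards [eventually_ge_atTop 2] with n hn
  have hn' : (0 : ℝ) < n := by positivity
  have hq := nilssonMonomial_pos q hn
  simp only [nilssonMonomial] at hq ⊢
  push_cast
  rw [Real.rpow_sub hn', Real.rpow_natCast]
  field_simp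

end nilssonMonomial

def IsLowerFinite (U : Set (ℚ × ℕ)) : Prop :=
  ∀ ω, {ω' | ω' ∈ U ∧ NilssonLe ω' ω}.Finite

lemma IsLowerFinite.union {U V : Set (ℚ × ℕ)} (hU : IsLowerFinite U) (hV : IsLowerFinite V) :
    IsLowerFinite (U ∪ V) := fun ω =>
  ((hU ω).union (hV ω)).subset fun _ ⟨hx, hle⟩ => hx.imp (⟨·, hle⟩) (⟨·, hle⟩)

lemma IsLowerFinite.finite_lt {U : Set (ℚ × ℕ)} (hU : IsLowerFinite U) (ω : ℚ × ℕ) :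
    {ω' | ω' ∈ U ∧ NilssonLt ω' ω}.Finite :=
  (hU ω).subset fun _ ⟨hx, hlt⟩ => ⟨hx, Or.inl hlt⟩

lemma IsLowerFinite.ncard_lt {U : Set (ℚ × ℕ)} (hU : IsLowerFinite U) {ω' ω : ℚ × ℕ}
    (hω' : ω' ∈ U) (hlt : NilssonLt ω' ω) :
    {x | x ∈ U ∧ NilssonLt x ω'}.ncard < {x | x ∈ U ∧ NilssonLt x ω}.ncard := by
  refine Set.ncard_lt_ncard ?_ (hU.finite_lt ω)
  simp only [nilssonLt_iff_key_lt] at hlt ⊢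
  refine Set.ssubset_iff_of_subset (fun x hx => ?_) |>.mpr ⟨ω', ⟨hω', hlt⟩, fun h => h.2.false⟩
  exact ⟨hx.1, hx.2.trans hlt⟩

lemma IsLowerFinite.finsum_mem_nilssonLe_eq_add {M : Type*} [AddCommMonoid M]
    {U : Set (ℚ × ℕ)} (hU : IsLowerFinite U) {ω ω₂ : ℚ × ℕ} (hle : NilssonLe ω ω₂)
    (f : ℚ × ℕ → M) :
    ∑ᶠ x ∈ {x | x ∈ U ∧ NilssonLe x ω₂}, f x =
      ∑ᶠ x ∈ {x | x ∈ U ∧ NilssonLt x ω}, f x +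
        ∑ᶠ x ∈ {x | x ∈ U ∧ NilssonLe ω x ∧ NilssonLe x ω₂}, f x := by
  have hle' := nilssonLe_iff_key_le.mp hle
  have hsplit : {x | x ∈ U ∧ NilssonLe x ω₂} =
      {x | x ∈ U ∧ NilssonLt x ω} ∪ {x | x ∈ U ∧ NilssonLe ω x ∧ NilssonLe x ω₂} := by
    ext x
    simp only [Set.mem_ofPred_eq, Set.mem_union, nilssonLe_iff_key_le, nilssonLt_iff_key_lt]
    constructor
    · rintro ⟨hx, hx₂⟩
      exact (lt_or_ge _ _).imp (⟨hx, ·⟩) (⟨hx, ·, hx₂⟩)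
    · rintro (⟨hx, hlt⟩ | ⟨hx, -, hx₂⟩)
      exacts [⟨hx, hlt.le.trans hle'⟩, ⟨hx, hx₂⟩]
  have hdisj : Disjoint {x | x ∈ U ∧ NilssonLt x ω} {x | x ∈ U ∧ NilssonLe ω x ∧ NilssonLe x ω₂} :=
    Set.disjoint_left.mpr fun x hx hx' =>
      (nilssonLt_iff_key_lt.mp hx.2).not_ge (nilssonLe_iff_key_le.mp hx'.2.1)
  rw [hsplit, finsum_mem_union hdisj (hU.finite_lt ω)
    ((hU ω₂).subset fun x hx => ⟨hx.1, hx.2.2⟩)]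

lemma isLowerFinite_omegaSet (S : Finset ℚ) (d : ℕ) : IsLowerFinite (OmegaSet S d) := by
  intro ω
  refine ((Set.Finite.biUnion S.finite_toSet fun s _ =>
    (Set.finite_Iic ⌈ω.1 - s⌉₊).image fun m : ℕ => s + m).prod (Set.finite_Iic d)).subset ?_
  rintro ω' ⟨⟨⟨s, hs, m, hm⟩, hd⟩, hle⟩
  refine ⟨Set.mem_biUnion hs ⟨m, ?_, hm.symm⟩, hd⟩
  have : (m : ℚ) ≤ ω.1 - s := by linarith [hle.fst_le]
  exact Nat.cast_le.mp (this.trans (Nat.le_ceil _))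

lemma exists_nilssonLe_mem_omegaSet {S : Finset ℚ} {d : ℕ} (hΩ : (OmegaSet S d).Nonempty)
    (ω : ℚ × ℕ) : ∃ ω₂ ∈ OmegaSet S d, NilssonLe ω ω₂ := by
  obtain ⟨-, ⟨s, hs, -⟩, -⟩ := hΩ
  refine ⟨(s + (⌈ω.1 - s⌉₊ + 1 : ℕ), 0), ⟨⟨s, hs, _, rfl⟩, Nat.zero_le d⟩, Or.inl (Or.inl ?_)⟩
  push_cast
  linarith [Nat.le_ceil (ω.1 - s)]

lemma exists_least_omegaSet {S : Finset ℚ} {d : ℕ} (hΩ : (OmegaSet S d).Nonempty) :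
    ∃ ω₀ ∈ OmegaSet S d, ∀ ω ∈ OmegaSet S d, NilssonLe ω₀ ω := by
  have hS : S.Nonempty := by obtain ⟨-, ⟨s, hs, -⟩, -⟩ := hΩ; exact ⟨s, hs⟩
  refine ⟨(S.min' hS, d), ⟨⟨_, S.min'_mem hS, 0, by simp⟩, le_rfl⟩, ?_⟩
  rintro ω ⟨⟨s, hs, m, hm⟩, hd⟩
  rw [nilssonLe_iff_key_le, nilssonKey, nilssonKey, Prod.Lex.toLex_le_toLex]
  have : S.min' hS ≤ ω.1 := by
    rw [hm]; linarith [S.min'_le s hs, (Nat.cast_nonneg m : (0 : ℚ) ≤ m)]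
  exact this.lt_or_eq.imp_right (⟨·, OrderDual.toDual_le_toDual.mpr hd⟩)

open Classical in
noncomputable def extendCoeff (Ω : Set (ℚ × ℕ)) (Λ : Finset ℂ) (c : ℚ × ℕ → ℂ → ℂ) :
    ℚ × ℕ → ℂ → ℂ :=
  fun ω l => if ω ∈ Ω ∧ l ∈ Λ then c ω l else 0

section extendCoeff

variable {Ω : Set (ℚ × ℕ)} {Λ : Finset ℂ} {c : ℚ × ℕ → ℂ → ℂ} {ω : ℚ × ℕ} {l : ℂ}

lemma extendCoeff_of_mem (hω : ω ∈ Ω) (hl : l ∈ Λ) : extendCoeff Ω Λ c ω l = c ω l :=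
  if_pos ⟨hω, hl⟩

lemma mem_of_extendCoeff_ne_zero (h : extendCoeff Ω Λ c ω l ≠ 0) : ω ∈ Ω ∧ l ∈ Λ := by
  by_contra hω
  exact h (if_neg hω)

open Classical in
lemma expSum_extendCoeff {Λ₀ : Finset ℂ} (hΛ : Λ ⊆ Λ₀) (r : ℝ) (ω : ℚ × ℕ) (n : ℕ) :
    expSum Λ₀ r (extendCoeff Ω Λ c ω) n = if ω ∈ Ω then expSum Λ r (c ω) n else 0 := by
  split_ifs with hω
  · refine (Finset.sum_subset hΛ fun l _ hl => ?_).symm.trans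
      (Finset.sum_congr rfl fun l hl => by rw [extendCoeff_of_mem hω hl])
    rw [extendCoeff, if_neg fun h => hl h.2, zero_mul]
  · exact Finset.sum_eq_zero fun l _ => by rw [extendCoeff, if_neg fun h => hω h.1, zero_mul]

lemma finsum_mul_expSum_extendCoeff {U : Set (ℚ × ℕ)} {Λ₀ : Finset ℂ} (hΩU : Ω ⊆ U)
    (hΛ : Λ ⊆ Λ₀) (P : ℚ × ℕ → Prop) (g : ℚ × ℕ → ℂ) (r : ℝ) (n : ℕ) :
    ∑ᶠ ω ∈ {ω | ω ∈ Ω ∧ P ω}, g ω * expSum Λ r (c ω) n =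
      ∑ᶠ ω ∈ {ω | ω ∈ U ∧ P ω}, g ω * expSum Λ₀ r (extendCoeff Ω Λ c ω) n := by
  classical
  refine (finsum_mem_congr rfl fun ω hω => ?_).trans
    (finsum_mem_inter_support_eq' _ _ _ fun ω hω => ?_)
  · rw [expSum_extendCoeff hΛ, if_pos hω.1]
  · have hωΩ : ω ∈ Ω := by
      by_contra hωΩ
      exact hω (by simp only [expSum_extendCoeff hΛ, if_neg hωΩ, mul_zero])
    exact ⟨fun h => ⟨hΩU h.1, h.2⟩, fun h => ⟨hωΩ, h.2⟩⟩

lemma subset_of_extendCoeff_eqOn {Ω' : Set (ℚ × ℕ)} {Λ' : Finset ℂ} {c' : ℚ × ℕ → ℂ → ℂ}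
    (hC : ∀ ω ∈ Ω, ∀ l ∈ Λ, extendCoeff Ω Λ c ω l = extendCoeff Ω' Λ' c' ω l)
    (hcol : ∀ l ∈ Λ, ∃ ω ∈ Ω, c ω l ≠ 0) (hrow : ∀ ω ∈ Ω, ∃ l ∈ Λ, c ω l ≠ 0) :
    Ω ⊆ Ω' ∧ Λ ⊆ Λ' := by
  have hmem : ∀ ω ∈ Ω, ∀ l ∈ Λ, c ω l ≠ 0 → ω ∈ Ω' ∧ l ∈ Λ' := fun ω hω l hl hne =>
    mem_of_extendCoeff_ne_zero (by rwa [← hC ω hω l hl, extendCoeff_of_mem hω hl])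
  refine ⟨fun ω hω => ?_, fun l hl => ?_⟩
  · obtain ⟨l, hl, hne⟩ := hrow ω hω
    exact (hmem ω hω l hl hne).1
  · obtain ⟨ω, hω, hne⟩ := hcol l hl
    exact (hmem ω hω l hl hne).2

end extendCoeff

/-- The form in which two expansions of the same sequence are compared: indexed by a set `U`
that may be larger than the support of `C`, with the `ω`-th term split off after dividing. -/
def IsNilssonTailExpansion (a : ℕ → ℂ) (U : Set (ℚ × ℕ)) (Λ : Finset ℂ) (r : ℝ)
    (C : ℚ × ℕ → ℂ → ℂ) : Prop :=
  ∀ ω ∈ U, Tendsto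
    (fun n : ℕ =>
      (a n * (r : ℂ) ^ (-(n : ℤ)) -
        ∑ᶠ ω' ∈ {ω' | ω' ∈ U ∧ NilssonLt ω' ω},
          ((nilssonMonomial ω' n : ℝ) : ℂ) * expSum Λ r (C ω') n)
      / ((nilssonMonomial ω n : ℝ) : ℂ) - expSum Λ r (C ω) n)
    atTop (𝓝 0)

lemma IsNilssonTailExpansion.eqOn {a : ℕ → ℂ} {U : Set (ℚ × ℕ)} {Λ : Finset ℂ} {r : ℝ}
    {C C' : ℚ × ℕ → ℂ → ℂ} (h : IsNilssonTailExpansion a U Λ r C)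
    (h' : IsNilssonTailExpansion a U Λ r C') (hU : IsLowerFinite U) (hr : 0 < r)
    (hΛ : ∀ l ∈ Λ, ‖l‖ = r) : ∀ ω ∈ U, ∀ l ∈ Λ, C ω l = C' ω l := by
  intro ω hω
  induction hk : {ω' | ω' ∈ U ∧ NilssonLt ω' ω}.ncard using Nat.strong_induction_on
    generalizing ω with
  | _ k ih =>
  have hsum : ∀ n : ℕ, ∑ᶠ ω' ∈ {ω' | ω' ∈ U ∧ NilssonLt ω' ω},
      ((nilssonMonomial ω' n : ℝ) : ℂ) * expSum Λ r (C ω') n =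
      ∑ᶠ ω' ∈ {ω' | ω' ∈ U ∧ NilssonLt ω' ω},
      ((nilssonMonomial ω' n : ℝ) : ℂ) * expSum Λ r (C' ω') n := fun n =>
    finsum_mem_congr rfl fun ω' ⟨hω'U, hlt⟩ => by
      have hC := ih _ (hk ▸ hU.ncard_lt hω'U hlt) ω' hω'U rfl
      rw [expSum, expSum, Finset.sum_congr rfl fun l hl => by rw [hC l hl]]
  have hdiff : Tendsto (expSum Λ r (C ω - C' ω)) atTop (𝓝 0) := by
    have := (h' ω hω).sub (h ω hω)
    rw [sub_zero] at this
    refine this.congr fun n => ?_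
    rw [expSum_sub, hsum n]
    ring
  exact fun l hl => sub_eq_zero.mp (coeff_eq_zero_of_tendsto_expSum hr hΛ hdiff l hl)

section IsNilssonExpansion

variable {a : ℕ → ℂ} {Ω : Set (ℚ × ℕ)} {Λ : Finset ℂ} {r : ℝ} {c : ℚ × ℕ → ℂ → ℂ}

lemma IsNilssonExpansion.nonempty (h : IsNilssonExpansion a Ω Λ r c) : Ω.Nonempty :=
  let ⟨ω, hω, _⟩ := h.2
  ⟨ω, hω⟩

lemma IsNilssonExpansion.tendsto_leading (h : IsNilssonExpansion a Ω Λ r c) {ω₀ : ℚ × ℕ}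
    (hω₀ : ω₀ ∈ Ω) (hleast : ∀ ω ∈ Ω, NilssonLe ω₀ ω) :
    Tendsto (fun n => a n * (r : ℂ) ^ (-(n : ℤ)) / ((nilssonMonomial ω₀ n : ℝ) : ℂ)
      - expSum Λ r (c ω₀) n) atTop (𝓝 0) := by
  have hsingle : ∀ ω', ω' ∈ Ω ∧ NilssonLe ω' ω₀ ↔ ω' = ω₀ := fun ω' => by
    refine ⟨fun ⟨hω', hle⟩ => nilssonKey_injective ?_, by rintro rfl; exact ⟨hω₀, Or.inr rfl⟩⟩
    exact le_antisymm (nilssonLe_iff_key_le.mp hle) (nilssonLe_iff_key_le.mp (hleast ω' hω'))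
  refine (h.1 ω₀ hω₀).congr' ?_
  filter_upwards [eventually_ge_atTop 2] with n hn
  have : ((nilssonMonomial ω₀ n : ℝ) : ℂ) ≠ 0 := by exact_mod_cast (nilssonMonomial_pos ω₀ hn).ne'
  simp only [hsingle, finsum_cond_eq_left]
  rw [sub_div, mul_div_cancel_left₀ _ this]
  rfl

lemma IsNilssonExpansion.radius_le {Ω' : Set (ℚ × ℕ)} {Λ' : Finset ℂ} {r' : ℝ}
    {c' : ℚ × ℕ → ℂ → ℂ} (h : IsNilssonExpansion a Ω Λ r c)
    (h' : IsNilssonExpansion a Ω' Λ' r' c') (hr : 0 < r) (hr' : 0 < r')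
    (hΛ : ∀ l ∈ Λ, ‖l‖ = r) (hΛ' : ∀ l ∈ Λ', ‖l‖ = r')
    (hleast : ∃ ω₀ ∈ Ω, ∀ ω ∈ Ω, NilssonLe ω₀ ω)
    (hleast' : ∃ ω₀ ∈ Ω', ∀ ω ∈ Ω', NilssonLe ω₀ ω)
    (hrow' : ∀ ω ∈ Ω', ∃ l ∈ Λ', c' ω l ≠ 0) : r' ≤ r := by
  by_contra! hlt
  obtain ⟨ω₀, hω₀, hle₀⟩ := hleast
  obtain ⟨ω₀', hω₀', hle₀'⟩ := hleast'
  have hρ : |r / r'| < 1 := by rw [abs_of_pos (by positivity), div_lt_one hr']; exact hlt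
  have hratio : Tendsto (fun n => (((r / r') ^ n * nilssonMonomial ω₀ n /
      nilssonMonomial ω₀' n : ℝ) : ℂ)) atTop (𝓝 0) := by
    simpa using (tendsto_pow_mul_nilssonMonomial_div hρ ω₀ ω₀').ofReal
  have hsmall : Tendsto (fun n => a n * (r' : ℂ) ^ (-(n : ℤ)) /
      ((nilssonMonomial ω₀' n : ℝ) : ℂ)) atTop (𝓝 0) := by
    have := ((h.tendsto_leading hω₀ hle₀).mul hratio).add
      (hratio.zero_mul_isBoundedUnder_le (isBoundedUnder_norm_expSum hr hΛ (c ω₀)))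
    rw [mul_zero, add_zero] at this
    refine this.congr' ?_
    filter_upwards [eventually_ge_atTop 2] with n hn
    have h₀ : ((nilssonMonomial ω₀ n : ℝ) : ℂ) ≠ 0 := by
      exact_mod_cast (nilssonMonomial_pos ω₀ hn).ne'
    have h₀' : ((nilssonMonomial ω₀' n : ℝ) : ℂ) ≠ 0 := by
      exact_mod_cast (nilssonMonomial_pos ω₀' hn).ne'
    have hr0 : (r : ℂ) ≠ 0 := by exact_mod_cast hr.ne'
    have hr0' : (r' : ℂ) ≠ 0 := by exact_mod_cast hr'.ne'
    push_cast
    simp only [zpow_neg, zpow_natCast, div_pow]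
    field_simp
    ring
  have hq : Tendsto (expSum Λ' r' (c' ω₀')) atTop (𝓝 0) := by
    simpa using hsmall.sub (h'.tendsto_leading hω₀' hle₀')
  obtain ⟨l, hl, hne⟩ := hrow' ω₀' hω₀'
  exact hne (coeff_eq_zero_of_tendsto_expSum hr' hΛ' hq l hl)

/-- Compare with the expansion at some `ω₂ ≥ ω` in `Ω`: after dividing by `h_ω`, of the terms
`ω ≤ ω' ≤ ω₂` only the `ω`-th survives. -/
lemma IsNilssonExpansion.isNilssonTailExpansion {U : Set (ℚ × ℕ)} {Λ₀ : Finset ℂ}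
    (h : IsNilssonExpansion a Ω Λ r c) (hU : IsLowerFinite U) (hΩU : Ω ⊆ U) (hΛΛ₀ : Λ ⊆ Λ₀)
    (hr : 0 < r) (hΛ₀ : ∀ l ∈ Λ₀, ‖l‖ = r) (hcof : ∀ ω, ∃ ω₂ ∈ Ω, NilssonLe ω ω₂) :
    IsNilssonTailExpansion a U Λ₀ r (extendCoeff Ω Λ c) := by
  intro ω hω
  obtain ⟨ω₂, hω₂, hle⟩ := hcof ω
  set H : ℚ × ℕ → ℕ → ℂ := fun p n => (nilssonMonomial p n : ℂ)
  set Q : ℚ × ℕ → ℕ → ℂ := fun p => expSum Λ₀ r (extendCoeff Ω Λ c p)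
  show Tendsto (fun n => (a n * (r : ℂ) ^ (-(n : ℤ)) -
    ∑ᶠ ω' ∈ {ω' | ω' ∈ U ∧ NilssonLt ω' ω}, H ω' n * Q ω' n) / H ω n - Q ω n) atTop (𝓝 0)
  set G := {ω' | ω' ∈ U ∧ NilssonLe ω ω' ∧ NilssonLe ω' ω₂}
  have hGfin : G.Finite := (hU ω₂).subset fun x hx => ⟨hx.1, hx.2.2⟩
  have hωG : ω ∈ hGfin.toFinset := hGfin.mem_toFinset.mpr ⟨hω, Or.inr rfl, hle⟩
  have hlim : ∀ ω' ∈ G, Tendsto (fun n => H ω' n / H ω n) atTop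
      (𝓝 (if ω' = ω then 1 else 0)) := fun ω' hω' => by
    simpa [H, apply_ite] using (tendsto_nilssonMonomial_div_of_le hω'.2.1).ofReal
  have hrest : Tendsto (fun n => ∑ ω' ∈ hGfin.toFinset,
      (H ω' n / H ω n - if ω' = ω then 1 else 0) * Q ω' n) atTop (𝓝 0) := by
    have := tendsto_finsetSum hGfin.toFinset fun ω' hω' =>
      Tendsto.zero_mul_isBoundedUnder_le
        (tendsto_sub_nhds_zero_iff.mpr (hlim ω' (hGfin.mem_toFinset.mp hω')))
        (isBoundedUnder_norm_expSum hr hΛ₀ (extendCoeff Ω Λ c ω'))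
    simpa using this
  have E₂ : Tendsto (fun n => (a n * (r : ℂ) ^ (-(n : ℤ)) -
      (∑ᶠ ω' ∈ {ω' | ω' ∈ U ∧ NilssonLt ω' ω}, H ω' n * Q ω' n +
        ∑ ω' ∈ hGfin.toFinset, H ω' n * Q ω' n)) / H ω₂ n) atTop (𝓝 0) :=
    (h.1 ω₂ hω₂).congr fun n => by
      rw [← finsum_mem_eq_finite_toFinset_sum _ hGfin, ← hU.finsum_mem_nilssonLe_eq_add hle]
      exact congrArg (fun x => (_ - x) / _) (finsum_mul_expSum_extendCoeff hΩU hΛΛ₀ _ _ r n)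
  have := (E₂.mul (hlim ω₂ ⟨hΩU hω₂, hle, Or.inr rfl⟩)).add hrest
  rw [zero_mul, zero_add] at this
  refine this.congr' ?_
  filter_upwards [eventually_ge_atTop 2] with n hn
  have hω0 : H ω n ≠ 0 := Complex.ofReal_ne_zero.mpr (nilssonMonomial_pos ω hn).ne'
  have hω₂0 : H ω₂ n ≠ 0 := Complex.ofReal_ne_zero.mpr (nilssonMonomial_pos ω₂ hn).ne'
  have hsum : ∑ ω' ∈ hGfin.toFinset, (H ω' n / H ω n - if ω' = ω then 1 else 0) * Q ω' n =
      (∑ ω' ∈ hGfin.toFinset, H ω' n * Q ω' n) / H ω n - Q ω n := by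
    simp only [sub_mul, Finset.sum_sub_distrib, ite_mul, one_mul, zero_mul, Finset.sum_ite_eq',
      if_pos hωG, Finset.sum_div, div_mul_eq_mul_div]
  rw [hsum]
  field_simp
  ring

end IsNilssonExpansion

theorem stmt_7 (a : ℕ → ℂ) (S S' : Finset ℚ) (d d' : ℕ) (Λ Λ' : Finset ℂ)
    (r r' : ℝ) (hr : 0 < r) (hr' : 0 < r')
    (hΛ : ∀ l ∈ Λ, ‖l‖ = r) (hΛ' : ∀ l ∈ Λ', ‖l‖ = r')
    (c c' : ℚ × ℕ → ℂ → ℂ)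
    (h1 : IsNilssonExpansion a (OmegaSet S d) Λ r c)
    (h2 : IsNilssonExpansion a (OmegaSet S' d') Λ' r' c')
    (hmin1a : ∀ l ∈ Λ, ∃ ω ∈ OmegaSet S d, c ω l ≠ 0)
    (hmin1b : ∀ ω ∈ OmegaSet S d, ∃ l ∈ Λ, c ω l ≠ 0)
    (hmin2a : ∀ l ∈ Λ', ∃ ω ∈ OmegaSet S' d', c' ω l ≠ 0)
    (hmin2b : ∀ ω ∈ OmegaSet S' d', ∃ l ∈ Λ', c' ω l ≠ 0) :
    OmegaSet S d = OmegaSet S' d' ∧ Λ = Λ' ∧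
      ∀ ω ∈ OmegaSet S d, ∀ l ∈ Λ, c ω l = c' ω l := by
  have hleast := exists_least_omegaSet h1.nonempty
  have hleast' := exists_least_omegaSet h2.nonempty
  obtain rfl : r = r' := le_antisymm (h2.radius_le h1 hr' hr hΛ' hΛ hleast' hleast hmin1b)
    (h1.radius_le h2 hr hr' hΛ hΛ' hleast hleast' hmin2b)
  have hU := (isLowerFinite_omegaSet S d).union (isLowerFinite_omegaSet S' d')
  have hΛ₀ : ∀ l ∈ Λ ∪ Λ', ‖l‖ = r := fun l hl => (Finset.mem_union.mp hl).elim (hΛ l) (hΛ' l)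
  have hC := (h1.isNilssonTailExpansion hU Set.subset_union_left Finset.subset_union_left hr hΛ₀
      (exists_nilssonLe_mem_omegaSet h1.nonempty)).eqOn
    (h2.isNilssonTailExpansion hU Set.subset_union_right Finset.subset_union_right hr hΛ₀
      (exists_nilssonLe_mem_omegaSet h2.nonempty)) hU hr hΛ₀
  obtain ⟨hΩ, hΛsub⟩ := subset_of_extendCoeff_eqOn
    (fun ω hω l hl => hC ω (Or.inl hω) l (Finset.mem_union_left _ hl)) hmin1a hmin1b
  obtain ⟨hΩ', hΛsub'⟩ := subset_of_extendCoeff_eqOn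
    (fun ω hω l hl => (hC ω (Or.inr hω) l (Finset.mem_union_right _ hl)).symm) hmin2a hmin2b
  refine ⟨hΩ.antisymm hΩ', hΛsub.antisymm hΛsub', fun ω hω l hl => ?_⟩
  rw [← extendCoeff_of_mem (c := c) hω hl, hC ω (Or.inl hω) l (Finset.mem_union_left _ hl),
    extendCoeff_of_mem (hΩ hω) (hΛsub hl)]
end

section
/- Let f : (0, ∞) → ℂ be measurable with |f(t)| ≤ C e^{σt} for some constants C, σ, and suppose f(t) = Σ_{k=0}^{K} b_k t^{γ+k−1} + O(t^{γ+K}) as t → 0⁺, where γ > 0. Then for n → ∞, ∫₀^∞ e^{−nt} f(t) dt = Σ_{k=0}^{K} b_k Γ(γ+k) n^{−γ−k} + O(n^{−γ−K−1}). -/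
/-!
Subtracting the local expansion leaves a remainder `g = O(t^(γ+K))` at `0⁺` for which `e^(-st) g`
is integrable once `s > max σ 0`, while each power `t^(γ+k-1)` transforms exactly into `Γ(γ+k) n^(-γ-k)`.
For the remainder split the integral at a small `δ`: on `(0, δ]` the bound `M t^(γ+K)` integrates
against `e^(-nt)` to at most `M Γ(γ+K+1) n^(-γ-K-1)`, and on `(δ, ∞)` the weight satisfies
`e^(-nt) ≤ e^(-(n-s)δ) e^(-st)` with `e^(-st) g` integrable, so that part is exponentially small.
-/

open MeasureTheory Filter Asymptotics Set Topology
open scoped Real Complex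

section Laplace

variable {a s x : ℝ}

lemma norm_cexp_neg_ofReal_mul (x t : ℝ) : ‖cexp (-(x : ℂ) * t)‖ = rexp (-(x * t)) := by
  rw [Complex.norm_exp, ← Complex.ofReal_neg, ← Complex.ofReal_mul, Complex.ofReal_re, neg_mul]

lemma cexp_neg_mul_mul_ofReal_rpow (x t a : ℝ) :
    cexp (-(x : ℂ) * t) * ((t ^ a : ℝ) : ℂ) = ((t ^ a * rexp (-(x * t)) : ℝ) : ℂ) := by
  push_cast
  ring_nf

lemma cexp_neg_mul_eq_mul (x s t : ℝ) :
    cexp (-(x : ℂ) * t) = cexp (-((x - s : ℝ) : ℂ) * t) * cexp (-(s : ℂ) * t) := by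
  rw [← Complex.exp_add]
  push_cast
  ring_nf

lemma integrableOn_rpow_mul_exp_neg_mul (ha : 0 < a) (hx : 0 < x) :
    IntegrableOn (fun t : ℝ => t ^ (a - 1) * rexp (-(x * t))) (Ioi 0) := by
  simpa only [Real.rpow_one, neg_mul] using
    integrableOn_rpow_mul_exp_neg_mul_rpow (s := a - 1) (p := 1) (by linarith) one_pos hx

lemma integrableOn_cexp_neg_mul_mul_rpow (ha : 0 < a) (hx : 0 < x) :
    IntegrableOn (fun t : ℝ => cexp (-(x : ℂ) * t) * ((t ^ (a - 1) : ℝ) : ℂ)) (Ioi 0) := by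
  simp_rw [cexp_neg_mul_mul_ofReal_rpow]
  exact (integrableOn_rpow_mul_exp_neg_mul ha hx).ofReal

lemma integral_cexp_neg_mul_mul_rpow (ha : 0 < a) (hx : 0 < x) :
    ∫ t in Ioi (0 : ℝ), cexp (-(x : ℂ) * t) * ((t ^ (a - 1) : ℝ) : ℂ)
      = ((Real.Gamma a * x ^ (-a) : ℝ) : ℂ) := by
  simp_rw [cexp_neg_mul_mul_ofReal_rpow]
  rw [integral_complex_ofReal, Real.integral_rpow_mul_exp_neg_mul_Ioi ha hx, one_div,
    Real.inv_rpow hx.le, Real.rpow_neg hx.le, mul_comm]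

variable {ι : Type*} {S : Finset ι} {b : ι → ℂ} {e : ι → ℝ}

lemma integrableOn_cexp_neg_mul_mul_sum_rpow (he : ∀ k ∈ S, 0 < e k) (hx : 0 < x) :
    IntegrableOn
      (fun t : ℝ => cexp (-(x : ℂ) * t) * ∑ k ∈ S, b k * ((t ^ (e k - 1) : ℝ) : ℂ)) (Ioi 0) := by
  simp_rw [Finset.mul_sum, mul_left_comm (cexp _)]
  exact integrable_finsetSum _ fun k hk =>
    (integrableOn_cexp_neg_mul_mul_rpow (he k hk) hx).const_mul (b k)

lemma integral_cexp_neg_mul_mul_sum_rpow (he : ∀ k ∈ S, 0 < e k) (hx : 0 < x) :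
    ∫ t in Ioi (0 : ℝ), cexp (-(x : ℂ) * t) * ∑ k ∈ S, b k * ((t ^ (e k - 1) : ℝ) : ℂ)
      = ∑ k ∈ S, b k * ((Real.Gamma (e k) * x ^ (-e k) : ℝ) : ℂ) := by
  simp_rw [Finset.mul_sum, mul_left_comm (cexp _)]
  rw [integral_finsetSum _ fun k hk =>
    (integrableOn_cexp_neg_mul_mul_rpow (he k hk) hx).const_mul (b k)]
  refine Finset.sum_congr rfl fun k hk => ?_
  rw [integral_const_mul, integral_cexp_neg_mul_mul_rpow (he k hk) hx]

lemma integrableOn_cexp_neg_mul_mul_of_norm_le_exp {f : ℝ → ℂ}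
    (hf : AEStronglyMeasurable f (volume.restrict (Ioi 0))) {C σ : ℝ}
    (hbound : ∀ t ∈ Ioi (0 : ℝ), ‖f t‖ ≤ C * rexp (σ * t)) (hx : σ < x) :
    IntegrableOn (fun t : ℝ => cexp (-(x : ℂ) * t) * f t) (Ioi 0) := by
  refine Integrable.mono' ((exp_neg_integrableOn_Ioi 0 (sub_pos.2 hx)).const_mul C)
    ((by fun_prop : Continuous fun t : ℝ => cexp (-(x : ℂ) * t)).aestronglyMeasurable.mul hf) ?_
  filter_upwards [ae_restrict_mem measurableSet_Ioi] with t ht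
  calc ‖cexp (-(x : ℂ) * t) * f t‖ ≤ rexp (-(x * t)) * (C * rexp (σ * t)) := by
        rw [norm_mul, norm_cexp_neg_ofReal_mul]
        exact mul_le_mul_of_nonneg_left (hbound t ht) (Real.exp_pos _).le
    _ = C * rexp (-(x - σ) * t) := by
        rw [mul_left_comm, ← Real.exp_add]
        ring_nf

end Laplace

section Remainder

variable {g : ℝ → ℂ} {a s x δ M : ℝ}

lemma integrableOn_cexp_neg_mul_mul_of_le
    (hg : IntegrableOn (fun t : ℝ => cexp (-(s : ℂ) * t) * g t) (Ioi 0)) (hx : s ≤ x) :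
    IntegrableOn (fun t : ℝ => cexp (-(x : ℂ) * t) * g t) (Ioi 0) := by
  have hbdd : ∀ᵐ t : ℝ ∂(volume.restrict (Ioi 0)), ‖cexp (-((x - s : ℝ) : ℂ) * t)‖ ≤ 1 := by
    filter_upwards [ae_restrict_mem measurableSet_Ioi] with t ht
    rw [norm_cexp_neg_ofReal_mul, Real.exp_le_one_iff, neg_nonpos]
    exact mul_nonneg (sub_nonneg.2 hx) (le_of_lt ht)
  have hcont : Continuous fun t : ℝ => cexp (-((x - s : ℝ) : ℂ) * t) := by fun_prop
  refine IntegrableOn.congr_fun (hg.bdd_mul hcont.aestronglyMeasurable hbdd)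
    (fun t _ => ?_) measurableSet_Ioi
  rw [cexp_neg_mul_eq_mul x s, mul_assoc]

lemma norm_setIntegral_Ioc_cexp_neg_mul_mul_le (ha : 0 < a) (hx : 0 < x) (hM : 0 ≤ M)
    (hbound : ∀ t ∈ Ioc 0 δ, ‖g t‖ ≤ M * t ^ (a - 1)) :
    ‖∫ t in Ioc 0 δ, cexp (-(x : ℂ) * t) * g t‖ ≤ M * Real.Gamma a * x ^ (-a) := by
  have hint : IntegrableOn (fun t => M * (t ^ (a - 1) * rexp (-(x * t)))) (Ioi 0) :=
    (integrableOn_rpow_mul_exp_neg_mul ha hx).const_mul M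
  calc ‖∫ t in Ioc 0 δ, cexp (-(x : ℂ) * t) * g t‖
      ≤ ∫ t in Ioc 0 δ, M * (t ^ (a - 1) * rexp (-(x * t))) := by
        refine norm_integral_le_of_norm_le (hint.mono_set Ioc_subset_Ioi_self) ?_
        filter_upwards [ae_restrict_mem measurableSet_Ioc] with t ht
        rw [norm_mul, norm_cexp_neg_ofReal_mul, mul_comm, ← mul_assoc]
        exact mul_le_mul_of_nonneg_right (hbound t ht) (Real.exp_pos _).le
    _ ≤ ∫ t in Ioi 0, M * (t ^ (a - 1) * rexp (-(x * t))) := by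
        refine setIntegral_mono_set hint ?_ (Eventually.of_forall Ioc_subset_Ioi_self)
        filter_upwards [ae_restrict_mem measurableSet_Ioi] with t ht
        exact mul_nonneg hM (mul_nonneg (Real.rpow_nonneg (le_of_lt ht) _) (Real.exp_pos _).le)
    _ = M * Real.Gamma a * x ^ (-a) := by
        rw [integral_const_mul, Real.integral_rpow_mul_exp_neg_mul_Ioi ha hx, one_div,
          Real.inv_rpow hx.le, Real.rpow_neg hx.le]
        ring

lemma norm_setIntegral_Ioi_cexp_neg_mul_mul_le
    (hg : IntegrableOn (fun t : ℝ => cexp (-(s : ℂ) * t) * g t) (Ioi δ)) (hx : s ≤ x) :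
    ‖∫ t in Ioi δ, cexp (-(x : ℂ) * t) * g t‖
      ≤ rexp (-(x - s) * δ) * ∫ t in Ioi δ, ‖cexp (-(s : ℂ) * t) * g t‖ := by
  rw [← integral_const_mul]
  refine norm_integral_le_of_norm_le (hg.norm.const_mul _) ?_
  filter_upwards [ae_restrict_mem measurableSet_Ioi] with t ht
  rw [cexp_neg_mul_eq_mul x s, mul_assoc, norm_mul, norm_cexp_neg_ofReal_mul]
  refine mul_le_mul_of_nonneg_right (Real.exp_le_exp.2 ?_) (norm_nonneg _)
  nlinarith [mul_le_mul_of_nonneg_left (le_of_lt (mem_Ioi.1 ht)) (sub_nonneg.2 hx)]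

theorem isBigO_integral_cexp_neg_mul_mul_atTop (ha : 0 < a)
    (hg : IntegrableOn (fun t : ℝ => cexp (-(s : ℂ) * t) * g t) (Ioi 0))
    (h0 : g =O[𝓝[>] 0] fun t => t ^ (a - 1)) :
    (fun x : ℝ => ∫ t in Ioi (0 : ℝ), cexp (-(x : ℂ) * t) * g t) =O[atTop] fun x => x ^ (-a) := by
  obtain ⟨M, hM, hMg⟩ := h0.exists_pos
  obtain ⟨δ, hδ, hδM⟩ := mem_nhdsGT_iff_exists_Ioc_subset.mp hMg.bound
  have hbound : ∀ t ∈ Ioc 0 δ, ‖g t‖ ≤ M * t ^ (a - 1) := fun t ht => by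
    simpa [abs_of_nonneg (Real.rpow_nonneg ht.1.le _)] using hδM ht
  have hnear : (fun x : ℝ => ∫ t in Ioc 0 δ, cexp (-(x : ℂ) * t) * g t)
      =O[atTop] fun x => x ^ (-a) := by
    refine IsBigO.of_bound (M * Real.Gamma a) ?_
    filter_upwards [eventually_gt_atTop 0] with x hx
    rw [Real.norm_of_nonneg (Real.rpow_nonneg hx.le _)]
    exact norm_setIntegral_Ioc_cexp_neg_mul_mul_le ha hx hM.le hbound
  have htail : (fun x : ℝ => ∫ t in Ioi δ, cexp (-(x : ℂ) * t) * g t)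
      =O[atTop] fun x => rexp (-δ * x) := by
    refine IsBigO.of_bound (rexp (s * δ) * ∫ t in Ioi δ, ‖cexp (-(s : ℂ) * t) * g t‖) ?_
    filter_upwards [eventually_ge_atTop s] with x hx
    rw [Real.norm_of_nonneg (Real.exp_pos _).le, mul_right_comm, ← Real.exp_add]
    have hgδ := hg.mono_set (Ioi_subset_Ioi hδ.le)
    refine (norm_setIntegral_Ioi_cexp_neg_mul_mul_le hgδ hx).trans_eq ?_
    ring_nf
  refine (hnear.add (htail.trans_isLittleO (isLittleO_exp_neg_mul_rpow_atTop hδ _)).isBigO).congr'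
    ?_ EventuallyEq.rfl
  filter_upwards [eventually_ge_atTop s] with x hx
  have hgx := integrableOn_cexp_neg_mul_mul_of_le hg hx
  rw [← setIntegral_union (Ioc_disjoint_Ioi le_rfl) measurableSet_Ioi
    (hgx.mono_set Ioc_subset_Ioi_self) (hgx.mono_set (Ioi_subset_Ioi hδ.le)),
    Ioc_union_Ioi_eq_Ioi hδ.le]

end Remainder

theorem isBigO_integral_cexp_neg_mul_sub_sum_atTop {f : ℝ → ℂ}
    (hf : AEStronglyMeasurable f (volume.restrict (Ioi 0))) {C σ : ℝ}
    (hbound : ∀ t ∈ Ioi (0 : ℝ), ‖f t‖ ≤ C * rexp (σ * t)) {γ : ℝ} (hγ : 0 < γ) {K : ℕ}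
    {b : ℕ → ℂ}
    (hexp : (fun t : ℝ => f t - ∑ k ∈ Finset.range (K + 1), b k * ((t ^ (γ + k - 1) : ℝ) : ℂ))
      =O[𝓝[>] 0] fun t : ℝ => t ^ (γ + K)) :
    (fun x : ℝ => (∫ t in Ioi (0 : ℝ), cexp (-(x : ℂ) * t) * f t) -
        ∑ k ∈ Finset.range (K + 1), b k * ((Real.Gamma (γ + k) * x ^ (-(γ + k)) : ℝ) : ℂ))
      =O[atTop] fun x : ℝ => x ^ (-(γ + K + 1)) := by
  have hpos : ∀ k ∈ Finset.range (K + 1), 0 < γ + (k : ℝ) := fun k _ => by positivity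
  have hσ : σ < max σ 0 + 1 := by linarith [le_max_left σ 0]
  have hremainder : IntegrableOn (fun t : ℝ => cexp (-((max σ 0 + 1 : ℝ) : ℂ) * t) *
      (f t - ∑ k ∈ Finset.range (K + 1), b k * ((t ^ (γ + k - 1) : ℝ) : ℂ))) (Ioi 0) := by
    simp_rw [mul_sub]
    exact (integrableOn_cexp_neg_mul_mul_of_norm_le_exp hf hbound hσ).sub
      (integrableOn_cexp_neg_mul_mul_sum_rpow hpos (by positivity))
  refine (isBigO_integral_cexp_neg_mul_mul_atTop (a := γ + K + 1) (by positivity) hremainder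
    (by simpa only [add_sub_cancel_right] using hexp)).congr' ?_ EventuallyEq.rfl
  filter_upwards [eventually_gt_atTop (max σ 0)] with x hx
  have hx0 : 0 < x := (le_max_right σ 0).trans_lt hx
  simp_rw [mul_sub]
  rw [integral_sub (integrableOn_cexp_neg_mul_mul_of_norm_le_exp hf hbound
    ((le_max_left σ 0).trans_lt hx)) (integrableOn_cexp_neg_mul_mul_sum_rpow hpos hx0),
    integral_cexp_neg_mul_mul_sum_rpow hpos hx0]

theorem stmt_17 (f : ℝ → ℂ) (hf : Measurable f) (C σ : ℝ)
    (hbound : ∀ t ∈ Set.Ioi (0 : ℝ), ‖f t‖ ≤ C * Real.exp (σ * t))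
    (γ : ℝ) (hγ : 0 < γ) (K : ℕ) (b : ℕ → ℂ)
    (hexp : (fun t : ℝ => f t - ∑ k ∈ Finset.range (K + 1),
        b k * ((t ^ (γ + k - 1) : ℝ) : ℂ))
      =O[nhdsWithin 0 (Set.Ioi 0)] fun t : ℝ => t ^ (γ + K)) :
    (fun n : ℕ =>
        (∫ t in Set.Ioi (0 : ℝ), Complex.exp (-(n : ℂ) * t) * f t) -
          ∑ k ∈ Finset.range (K + 1),
            b k * ((Real.Gamma (γ + k) * (n : ℝ) ^ (-(γ + k)) : ℝ) : ℂ))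
      =O[Filter.atTop] fun n : ℕ => (n : ℝ) ^ (-(γ + K + 1)) := by
  simpa only [Function.comp_def, Complex.ofReal_natCast] using
    (isBigO_integral_cexp_neg_mul_sub_sum_atTop hf.aestronglyMeasurable hbound hγ
      hexp).comp_tendsto tendsto_natCast_atTop_atTop
end
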